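/- arXiv:1906.05606 — 3 statements merged into one kernel-verified Lean document; each statement's English description precedes it below -/
import Mathlib

section
/- Let G be a group, N ⊴ G, and K₁, ..., K_m ≤ G subgroups such that (K₁ ∩ ... ∩ K_m)N = G. For n₁, ..., n_m ∈ N, the intersection of the cosets n₁K₁ ∩ ... ∩ n_mK_m is nonempty if and only if the intersection n₁(K₁ ∩ N) ∩ ... ∩ n_m(K_m ∩ N) is nonempty. -/
open scoped Pointwise

/-- Let `G` be a group, `N ⊴ G` normal and `K₁, …, K_m ≤ G` subgroups
with `(K₁ ∩ … ∩ K_m)N = G` (set product). For `n₁, …, n_m ∈ N`, the intersection of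
the cosets `nᵢKᵢ` is nonempty iff the intersection of the cosets `nᵢ(Kᵢ ∩ N)` is
nonempty. -/
theorem coset_inter_nonempty_iff_inter_kernel {G : Type*} [Group G] (N : Subgroup G)
    [N.Normal] {m : ℕ} (K : Fin m → Subgroup G)
    (h : ((⨅ i, K i : Subgroup G) : Set G) * (N : Set G) = Set.univ)
    (n : Fin m → G) (hn : ∀ i, n i ∈ N) :
    (⋂ i, n i • (K i : Set G)).Nonempty ↔
      (⋂ i, n i • ((K i ⊓ N : Subgroup G) : Set G)).Nonempty := by
  constructor
  · rintro ⟨g, hg⟩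
    simp only [Set.mem_iInter, Set.mem_smul_set_iff_inv_smul_mem, smul_eq_mul,
      SetLike.mem_coe] at hg
    -- decompose g = k * ν with k ∈ ⨅ K i, ν ∈ N
    have hgmem : g ∈ ((⨅ i, K i : Subgroup G) : Set G) * (N : Set G) := by
      rw [h]; trivial
    obtain ⟨k, hk, ν, hν, rfl⟩ := hgmem
    refine ⟨k * ν * k⁻¹, ?_⟩
    simp only [Set.mem_iInter, Set.mem_smul_set_iff_inv_smul_mem, smul_eq_mul,
      SetLike.mem_coe, Subgroup.mem_inf]
    intro i
    have hkK : k ∈ K i := (Subgroup.mem_iInf.mp hk) i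
    constructor
    · have : (n i)⁻¹ * (k * ν) ∈ K i := hg i
      have := mul_mem this (inv_mem hkK)
      simpa [mul_assoc] using this
    · exact mul_mem (inv_mem (hn i)) (Subgroup.Normal.conj_mem ‹N.Normal› ν hν k)
  · rintro ⟨g, hg⟩
    refine ⟨g, ?_⟩
    simp only [Set.mem_iInter] at hg ⊢
    intro i
    exact Set.smul_set_mono (by exact_mod_cast inf_le_left) (hg i)
end

section
/- Let Γ be a finite simplicial graph with standard pre-order v ≤ w iff lk(v) ⊆ st(w). If the equivalence class [v] contains two non-adjacent distinct vertices, then no two distinct vertices of [v] are adjacent, i.e., [v] is a discrete subgraph. -/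
/-- The star of a vertex: the vertex together with its link (neighbor set). -/
def SimpleGraph.star {V : Type*} (Γ : SimpleGraph V) (v : V) : Set V :=
  insert v (Γ.neighborSet v)

/-- The equivalence induced by the standard pre-order `v ≤ w ↔ lk(v) ⊆ st(w)`:
`v ∼ w ↔ v ≤ w ∧ w ≤ v`. -/
def SimpleGraph.stdEquiv {V : Type*} (Γ : SimpleGraph V) (v w : V) : Prop :=
  Γ.neighborSet v ⊆ Γ.star w ∧ Γ.neighborSet w ⊆ Γ.star v

/-- In a finite simplicial graph, if the equivalence class `[v]`
contains two distinct non-adjacent vertices, then no two distinct vertices of `[v]`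
are adjacent, i.e. `[v]` is a discrete subgraph. -/
theorem equivClass_is_discrete_of_nonadj {V : Type*} [Fintype V] (Γ : SimpleGraph V)
    (v w : V) (hvw : Γ.stdEquiv v w) (hne : v ≠ w) (hnadj : ¬ Γ.Adj v w) :
    ∀ x y : V, Γ.stdEquiv v x → Γ.stdEquiv v y → x ≠ y → ¬ Γ.Adj x y := by
  have lemA : ∀ y : V, Γ.stdEquiv v y → ¬ Γ.Adj v y := by
    intro y hy hadj
    have h1 : y ∈ Γ.star w := hvw.1 hadj
    rcases Set.mem_insert_iff.mp h1 with heq | h2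
    · exact hnadj (heq ▸ hadj)
    · have h3 : w ∈ Γ.star v := hy.2 h2.symm
      rcases Set.mem_insert_iff.mp h3 with heq2 | h4
      · exact hne heq2.symm
      · exact hnadj h4
  intro x y hx hy hxy hadj
  have h1 : y ∈ Γ.star v := hx.2 hadj
  rcases Set.mem_insert_iff.mp h1 with heq | h1
  · subst heq
    have h2 : x ∈ Γ.star y := hy.2 hadj.symm
    rcases Set.mem_insert_iff.mp h2 with heq2 | h2
    · exact hxy heq2
    · exact lemA x hx h2
  · exact lemA y hy h1
end

section
/- Let G be a group and H a family of proper subgroups of G that is strongly divided by a normal subgroup N ⊴ G (i.e., every H ∈ H with HN ≠ G contains N, and for every finite collection K₁,...,K_m ∈ H with K_iN = G one has (K₁ ∩ ... ∩ K_m)N = G). Then the family of all finite intersections of elements of H is divided by N: for every finite intersection H' with H'N ≠ G one has H'N in the intersection-closure of H, and for H' with H'N ≠ G and K' a finite intersection of elements K ∈ H with KN = G, the subgroup H'N ∩ K' lies in the intersection-closure of H. -/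
/-- The intersection-closure of a family of subgroups: all intersections of nonempty
finite subfamilies. -/
def interClosure {G : Type*} [Group G] (𝓗 : Set (Subgroup G)) : Set (Subgroup G) :=
  {H | ∃ s : Finset (Subgroup G), s.Nonempty ∧ ↑s ⊆ 𝓗 ∧ H = s.inf id}

open scoped Pointwise in
private lemma key_absorb {G : Type*} [Group G] (N A B : Subgroup G) [N.Normal]
    (hNA : N ≤ A) (hB : B ⊔ N = ⊤) : (A ⊓ B) ⊔ N = A := by
  apply le_antisymm (sup_le inf_le_left hNA)
  intro a ha
  have hmem : a ∈ ((B : Set G) * (N : Set G)) := by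
    rw [← Subgroup.mul_normal, hB]; trivial
  obtain ⟨b, hb, n, hn, rfl⟩ := hmem
  have hbA : b ∈ A := by
    have : (b * n) * n⁻¹ ∈ A := mul_mem ha (inv_mem (hNA hn))
    simpa using this
  exact mul_mem (Subgroup.mem_sup_left ⟨hbA, hb⟩) (Subgroup.mem_sup_right hn)

/-- Let `𝓗` be a family of proper subgroups of `G` which is strongly
divided by a normal subgroup `N ⊴ G`: every `H ∈ 𝓗` with `HN ≠ G` contains `N`, and for
all `K₁, …, K_m ∈ 𝓗` with `KᵢN = G` one has `(K₁ ∩ … ∩ K_m)N = G`.  (Since `N` is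
normal, the set product `HN` is the subgroup `H ⊔ N`.)  Then the family `𝓗̃` of all
finite intersections of members of `𝓗` is divided by `N`:
for every `H ∈ 𝓗̃` with `HN ≠ G` one has `HN ∈ 𝓗̃`, and for every such `H` and every
finite intersection `K` of members of `𝓗` whose product with `N` is `G`, one has
`HN ∩ K ∈ 𝓗̃`. -/
theorem interClosure_divided_of_stronglyDivided {G : Type*} [Group G]
    (N : Subgroup G) [N.Normal] (𝓗 : Set (Subgroup G))
    (hproper : ∀ H ∈ 𝓗, H ≠ ⊤)
    (hsd₁ : ∀ H ∈ 𝓗, H ⊔ N ≠ ⊤ → N ≤ H)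
    (hsd₂ : ∀ s : Finset (Subgroup G), ↑s ⊆ {K ∈ 𝓗 | K ⊔ N = ⊤} →
      (s.inf id) ⊔ N = ⊤) :
    (∀ H ∈ interClosure 𝓗, H ⊔ N ≠ ⊤ → H ⊔ N ∈ interClosure 𝓗) ∧
    (∀ H ∈ interClosure 𝓗, H ⊔ N ≠ ⊤ →
      ∀ K : Subgroup G,
        (∃ s : Finset (Subgroup G), s.Nonempty ∧ ↑s ⊆ {K' ∈ 𝓗 | K' ⊔ N = ⊤} ∧
          K = s.inf id) →
        (H ⊔ N) ⊓ K ∈ interClosure 𝓗) := by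
  classical
  have main : ∀ H ∈ interClosure 𝓗, H ⊔ N ≠ ⊤ →
      ∃ s₁ : Finset (Subgroup G), s₁.Nonempty ∧ ↑s₁ ⊆ 𝓗 ∧ H ⊔ N = s₁.inf id := by
    rintro H ⟨s, hsne, hs, rfl⟩ hHN
    set s₁ := s.filter (fun H => ¬ (H ⊔ N = ⊤)) with hs₁def
    set s₂ := s.filter (fun H => H ⊔ N = ⊤) with hs₂def
    have hsplit : s₂ ∪ s₁ = s := Finset.filter_union_filter_not_eq _ s
    have hNle : N ≤ s₁.inf id := Finset.le_inf fun K hK => by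
      simp only [hs₁def, Finset.mem_filter] at hK
      exact hsd₁ K (hs hK.1) hK.2
    have hs₂sup : s₂.inf id ⊔ N = ⊤ := hsd₂ s₂ (by
      intro K hK
      simp only [hs₂def, Finset.coe_filter, Set.mem_setOf_eq] at hK
      exact ⟨hs hK.1, hK.2⟩)
    have hinf : s.inf id = s₁.inf id ⊓ s₂.inf id := by
      rw [← hsplit, Finset.inf_union]; exact inf_comm _ _
    have hs₁ne : s₁.Nonempty := by
      by_contra h
      rw [Finset.not_nonempty_iff_eq_empty] at h
      apply hHN
      rw [hinf, h]
      simpa using hs₂sup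
    refine ⟨s₁, hs₁ne, ?_, ?_⟩
    · intro K hK
      simp only [hs₁def, Finset.coe_filter, Set.mem_setOf_eq] at hK
      exact hs hK.1
    · rw [hinf, key_absorb N _ _ hNle hs₂sup]
  constructor
  · intro H hH hHN
    obtain ⟨s₁, hne, hsub, heq⟩ := main H hH hHN
    exact ⟨s₁, hne, hsub, heq⟩
  · rintro H hH hHN K ⟨t, htne, ht, rfl⟩
    obtain ⟨s₁, hne, hsub, heq⟩ := main H hH hHN
    refine ⟨s₁ ∪ t, hne.mono (Finset.subset_union_left), ?_, ?_⟩
    · rw [Finset.coe_union]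
      exact Set.union_subset hsub (fun K hK => (ht hK).1)
    · rw [Finset.inf_union, heq]
end
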